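/- Let X have the Laplace density ρ(x) = ½ exp(−|x|) on ℝ and let Z ~ N(0,1) be independent of X. Let p, q : [0,T] → [0,∞) be continuous with p(0) = q(0) = 0 and p(t), q(t) > 0 on (0,ε) for some ε > 0, and suppose lim_{t→0⁺} q(t)²/p(t) = c < ∞. Let y : [0,T] → ℝ be continuous with lim_{t→0⁺} y(t) = y₀ and |y₀| > c. Then lim_{t→0⁺} p(t) · E[X | p(t)X + q(t)Z = y(t)] = (1 − c/|y₀|) y₀, where E[X | pX + qZ = y] denotes the ratio (∫ x exp(−(y−px)²/(2q²)) exp(−|x|) dx) / (∫ exp(−(y−px)²/(2q²)) exp(−|x|) dx). -/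

import Mathlib

open MeasureTheory Set Filter
open scoped Topology

noncomputable section

/-- The conditional expectation `E[X | pX + qZ = y]` for `X` Laplace and `Z` standard normal,
defined as a ratio of integrals over `ℝ`. -/
def lapCondExp (p q y : ℝ) : ℝ :=
  (∫ x : ℝ, x * Real.exp (-(y - p * x) ^ 2 / (2 * q ^ 2)) * Real.exp (-|x|)) /
    (∫ x : ℝ, Real.exp (-(y - p * x) ^ 2 / (2 * q ^ 2)) * Real.exp (-|x|))

/-!
Write `y = m + q²/p`. The substitution `x = (q v + m) / p` completes the square: it turns
`exp (-(y - p x)² / (2 q²)) · exp (-|x|)` into a constant multiple of the weight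
`w v = exp (-v²/2 - (|q v + m| - (q v + m)) / p)`, so that
`p · lapCondExp p q y = m + q · (∫ v w) / (∫ w)`. The weight lies below the standard Gaussian
and equals it for `v > 0` once `m ≥ 0`, so `∫ w ≥ √(2π)/2 ≥ 1` and the ratio is bounded by
`∫ |v| e^{-v²/2}`. Hence `p · lapCondExp p q y - m = O(q) → 0` while `m → y₀ - c`; the case
`y₀ < 0` follows since `lapCondExp` is odd in `y`.
-/

lemma integral_eq_mul_integral_comp_mul_add (F : ℝ → ℝ) {a : ℝ} (ha : 0 < a) (b : ℝ) :
    ∫ x, F x = a * ∫ v, F (a * v + b) := by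
  rw [Measure.integral_comp_mul_left (fun u ↦ F (u + b)), integral_add_right_eq_self F b,
    smul_eq_mul, abs_inv, abs_of_pos ha, mul_inv_cancel_left₀ ha.ne']

def gaussAbsMoment : ℝ := ∫ v : ℝ, |v| * Real.exp (-(1 / 2) * v ^ 2)

lemma integrable_abs_mul_exp_neg_mul_sq {b : ℝ} (hb : 0 < b) :
    Integrable fun v : ℝ ↦ |v| * Real.exp (-b * v ^ 2) := by
  simpa [abs_mul] using (integrable_mul_exp_neg_mul_sq hb).abs

lemma one_le_integral_of_eq_gaussian_on_Ioi {w : ℝ → ℝ} (hw : Integrable w)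
    (hw_nonneg : ∀ v, 0 ≤ w v) (hw_eq : ∀ v, 0 < v → w v = Real.exp (-(1 / 2) * v ^ 2)) :
    1 ≤ ∫ v, w v := by
  have h_half : ∫ v in Ioi (0 : ℝ), w v = √(Real.pi / (1 / 2)) / 2 := by
    rw [setIntegral_congr_fun measurableSet_Ioi hw_eq, integral_gaussian_Ioi]
  have h_half_ge : (1 : ℝ) ≤ √(Real.pi / (1 / 2)) / 2 := by
    nlinarith [Real.sq_sqrt (show (0 : ℝ) ≤ Real.pi / (1 / 2) by positivity),
      Real.sqrt_nonneg (Real.pi / (1 / 2)), Real.pi_gt_three]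
  calc (1 : ℝ) ≤ ∫ v in Ioi 0, w v := h_half ▸ h_half_ge
    _ ≤ ∫ v, w v := setIntegral_le_integral hw (.of_forall hw_nonneg)

lemma abs_integral_mul_div_integral_le {w : ℝ → ℝ} (hw : AEStronglyMeasurable w)
    (hw_nonneg : ∀ v, 0 ≤ w v) (hw_le : ∀ v, w v ≤ Real.exp (-(1 / 2) * v ^ 2))
    (hw_eq : ∀ v, 0 < v → w v = Real.exp (-(1 / 2) * v ^ 2)) :
    |(∫ v, v * w v) / ∫ v, w v| ≤ gaussAbsMoment := by
  have hw_int : Integrable w :=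
    (integrable_exp_neg_mul_sq (by norm_num : (0 : ℝ) < 1 / 2)).mono' hw
      (.of_forall fun v ↦ by simpa [abs_of_nonneg (hw_nonneg v)] using hw_le v)
  have h_abs_le : ∀ v, |v * w v| ≤ |v| * Real.exp (-(1 / 2) * v ^ 2) := fun v ↦ by
    rw [abs_mul, abs_of_nonneg (hw_nonneg v)]
    exact mul_le_mul_of_nonneg_left (hw_le v) (abs_nonneg v)
  have h_one_le := one_le_integral_of_eq_gaussian_on_Ioi hw_int hw_nonneg hw_eq
  calc |(∫ v, v * w v) / ∫ v, w v| ≤ |∫ v, v * w v| := by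
        rw [abs_div, abs_of_pos (one_pos.trans_le h_one_le)]
        exact div_le_self (abs_nonneg _) h_one_le
    _ ≤ gaussAbsMoment :=
        abs_integral_le_integral_abs.trans <|
          integral_mono_of_nonneg (.of_forall fun _ ↦ abs_nonneg _)
            (integrable_abs_mul_exp_neg_mul_sq (by norm_num)) (.of_forall h_abs_le)

def lapWeight (p q m v : ℝ) : ℝ := Real.exp (-(1 / 2) * v ^ 2 - (|q * v + m| - (q * v + m)) / p)

section lapWeight

variable {p q m : ℝ}

lemma lapWeight_pos (v : ℝ) : 0 < lapWeight p q m v := Real.exp_pos _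

lemma lapWeight_le (hp : 0 ≤ p) (v : ℝ) : lapWeight p q m v ≤ Real.exp (-(1 / 2) * v ^ 2) :=
  Real.exp_le_exp.2 <| sub_le_self _ <| div_nonneg (sub_nonneg.2 (le_abs_self _)) hp

lemma lapWeight_of_nonneg {v : ℝ} (h : 0 ≤ q * v + m) :
    lapWeight p q m v = Real.exp (-(1 / 2) * v ^ 2) := by
  simp [lapWeight, abs_of_nonneg h]

lemma continuous_lapWeight : Continuous (lapWeight p q m) := by
  unfold lapWeight; fun_prop

lemma integrable_lapWeight (hp : 0 ≤ p) : Integrable (lapWeight p q m) :=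
  (integrable_exp_neg_mul_sq (by norm_num : (0 : ℝ) < 1 / 2)).mono'
    continuous_lapWeight.aestronglyMeasurable
    (.of_forall fun v ↦ by simpa [Real.norm_eq_abs, lapWeight] using lapWeight_le hp v)

lemma integrable_mul_lapWeight (hp : 0 ≤ p) : Integrable fun v ↦ v * lapWeight p q m v :=
  (integrable_abs_mul_exp_neg_mul_sq (by norm_num : (0 : ℝ) < 1 / 2)).mono'
    (continuous_id.mul continuous_lapWeight).aestronglyMeasurable
    (.of_forall fun v ↦ by
      rw [norm_mul, Real.norm_eq_abs, Real.norm_of_nonneg (lapWeight_pos v).le]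
      exact mul_le_mul_of_nonneg_left (lapWeight_le hp v) (abs_nonneg v))

lemma integral_lapWeight_pos (hp : 0 ≤ p) : 0 < ∫ v, lapWeight p q m v :=
  integral_exp_pos (integrable_lapWeight hp)

lemma abs_integral_mul_lapWeight_div_le (hp : 0 ≤ p) (hq : 0 ≤ q) (hm : 0 ≤ m) :
    |(∫ v, v * lapWeight p q m v) / ∫ v, lapWeight p q m v| ≤ gaussAbsMoment :=
  abs_integral_mul_div_integral_le continuous_lapWeight.aestronglyMeasurable
    (fun v ↦ (lapWeight_pos v).le) (lapWeight_le hp)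
    (fun _ hv ↦ lapWeight_of_nonneg (by positivity))

end lapWeight

lemma lapCondExp_integrand_comp {p q : ℝ} (hp : 0 < p) (hq : q ≠ 0) (m v : ℝ) :
    Real.exp (-(m + q ^ 2 / p - p * (q / p * v + m / p)) ^ 2 / (2 * q ^ 2)) *
        Real.exp (-|q / p * v + m / p|) =
      Real.exp (-q ^ 2 / (2 * p ^ 2) - m / p) * lapWeight p q m v := by
  rw [show q / p * v + m / p = (q * v + m) / p by ring, abs_div, abs_of_pos hp, lapWeight,
    ← Real.exp_add, ← Real.exp_add]
  congr 1
  field_simp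
  ring

lemma mul_lapCondExp_eq {p q : ℝ} (hp : 0 < p) (hq : 0 < q) (m : ℝ) :
    p * lapCondExp p q (m + q ^ 2 / p) =
      m + q * ((∫ v, v * lapWeight p q m v) / ∫ v, lapWeight p q m v) := by
  set C := Real.exp (-q ^ 2 / (2 * p ^ 2) - m / p) with hC_def
  have h_subst := fun F ↦ integral_eq_mul_integral_comp_mul_add F (div_pos hq hp) (m / p)
  have h_den : ∫ x, Real.exp (-(m + q ^ 2 / p - p * x) ^ 2 / (2 * q ^ 2)) * Real.exp (-|x|) =
      q / p * (C * ∫ v, lapWeight p q m v) := by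
    rw [h_subst]
    simp_rw [lapCondExp_integrand_comp hp hq.ne']
    rw [integral_const_mul]
  have h_num : ∫ x, x * Real.exp (-(m + q ^ 2 / p - p * x) ^ 2 / (2 * q ^ 2)) * Real.exp (-|x|) =
      q / p * (C / p * (q * (∫ v, v * lapWeight p q m v) + m * ∫ v, lapWeight p q m v)) := by
    calc _ = q / p * ∫ v, C / p * ((q * v + m) * lapWeight p q m v) := by
          rw [h_subst]
          congr 2 with v
          rw [mul_assoc, lapCondExp_integrand_comp hp hq.ne', ← hC_def]
          field_simp
      _ = _ := by
          simp_rw [integral_const_mul, add_mul, mul_assoc]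
          rw [integral_add ((integrable_mul_lapWeight hp.le).const_mul q)
            ((integrable_lapWeight hp.le).const_mul m), integral_const_mul, integral_const_mul]
  have h_pos := integral_lapWeight_pos hp.le (q := q) (m := m)
  have hC : 0 < C := Real.exp_pos _
  rw [lapCondExp, h_num, h_den]
  field_simp
  ring

lemma abs_mul_lapCondExp_sub_le {p q m : ℝ} (hp : 0 < p) (hq : 0 < q) (hm : 0 ≤ m) :
    |p * lapCondExp p q (m + q ^ 2 / p) - m| ≤ q * gaussAbsMoment := by
  rw [mul_lapCondExp_eq hp hq, add_sub_cancel_left, abs_mul, abs_of_pos hq]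
  exact mul_le_mul_of_nonneg_left (abs_integral_mul_lapWeight_div_le hp.le hq.le hm) hq.le

lemma lapCondExp_neg (p q y : ℝ) : lapCondExp p q (-y) = -lapCondExp p q y := by
  have h_sq : ∀ x, (-y - p * -x) ^ 2 = (y - p * x) ^ 2 := fun x ↦ by ring
  rw [lapCondExp, lapCondExp, ← integral_neg_eq_self _ volume,
    ← integral_neg_eq_self (fun x ↦ Real.exp (-(-y - p * x) ^ 2 / (2 * q ^ 2)) * Real.exp (-|x|))]
  simp only [h_sq, abs_neg, neg_mul, integral_neg, neg_div]

lemma tendsto_mul_lapCondExp {α : Type*} {l : Filter α} {p q y : α → ℝ} {c y₀ : ℝ}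
    (hp : ∀ᶠ t in l, 0 < p t) (hq : ∀ᶠ t in l, 0 < q t) (hq_lim : Tendsto q l (𝓝 0))
    (hc : Tendsto (fun t ↦ q t ^ 2 / p t) l (𝓝 c)) (hy : Tendsto y l (𝓝 y₀)) (hcy : c < y₀) :
    Tendsto (fun t ↦ p t * lapCondExp (p t) (q t) (y t)) l (𝓝 (y₀ - c)) := by
  have hm : Tendsto (fun t ↦ y t - q t ^ 2 / p t) l (𝓝 (y₀ - c)) := hy.sub hc
  have h_err : Tendsto (fun t ↦ p t * lapCondExp (p t) (q t) (y t) - (y t - q t ^ 2 / p t)) l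
      (𝓝 0) := by
    refine squeeze_zero_norm' ?_ (by simpa using hq_lim.mul_const gaussAbsMoment)
    filter_upwards [hp, hq, hm.eventually (lt_mem_nhds (sub_pos.2 hcy))] with t hpt hqt hmt
    simpa using abs_mul_lapCondExp_sub_le hpt hqt hmt.le
  simpa using hm.add h_err

theorem laplace_cond_exp_limit_general (T ε c y₀ : ℝ) (hT : 0 < T) (hε : 0 < ε)
    (p q : ℝ → ℝ)
    (hqc : ContinuousOn q (Icc 0 T))
    (hq0 : q 0 = 0)
    (hpos : ∀ t ∈ Ioo (0:ℝ) ε, 0 < p t ∧ 0 < q t)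
    (hc : Tendsto (fun t => q t ^ 2 / p t) (𝓝[>] 0) (𝓝 c))
    (y : ℝ → ℝ)
    (hy0 : Tendsto y (𝓝[>] 0) (𝓝 y₀)) (hy₀ : c < |y₀|) :
    Tendsto (fun t => p t * lapCondExp (p t) (q t) (y t)) (𝓝[>] 0)
      (𝓝 ((1 - c / |y₀|) * y₀)) := by
  have hp : ∀ᶠ t in 𝓝[>] 0, 0 < p t :=
    mem_of_superset (Ioo_mem_nhdsGT hε) fun t ht ↦ (hpos t ht).1
  have hq : ∀ᶠ t in 𝓝[>] 0, 0 < q t :=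
    mem_of_superset (Ioo_mem_nhdsGT hε) fun t ht ↦ (hpos t ht).2
  have hq_lim : Tendsto q (𝓝[>] 0) (𝓝 0) := by
    simpa [ContinuousWithinAt, hq0] using
      (hqc 0 ⟨le_rfl, hT.le⟩).mono_of_mem_nhdsWithin (Icc_mem_nhdsGT hT)
  have hc_nonneg : 0 ≤ c := ge_of_tendsto hc (hp.mono fun t ht ↦ div_nonneg (sq_nonneg _) ht.le)
  have hy₀_ne : y₀ ≠ 0 := by
    rintro rfl
    rw [abs_zero] at hy₀
    linarith
  rcases hy₀_ne.lt_or_gt with hy₀_neg | hy₀_pos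
  · rw [abs_of_neg hy₀_neg] at hy₀ ⊢
    have h_lim := (tendsto_mul_lapCondExp hp hq hq_lim hc hy0.neg hy₀).neg
    rw [show (1 - c / -y₀) * y₀ = -(-y₀ - c) by field_simp; ring]
    simpa [lapCondExp_neg] using h_lim
  · rw [abs_of_pos hy₀_pos] at hy₀ ⊢
    rw [show (1 - c / y₀) * y₀ = y₀ - c by field_simp]
    exact tendsto_mul_lapCondExp hp hq hq_lim hc hy0 hy₀

/-- with `q(t)²/p(t) → c` and `y(t) → y₀`, `|y₀| > c`, one has
`p(t) E[X | p(t)X + q(t)Z = y(t)] → (1 − c/|y₀|) y₀` as `t → 0⁺`. -/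
theorem laplace_cond_exp_limit (T ε c y₀ : ℝ) (hT : 0 < T) (hε : 0 < ε)
    (p q : ℝ → ℝ)
    (hpc : ContinuousOn p (Icc 0 T)) (hqc : ContinuousOn q (Icc 0 T))
    (hpnn : ∀ t ∈ Icc (0:ℝ) T, 0 ≤ p t) (hqnn : ∀ t ∈ Icc (0:ℝ) T, 0 ≤ q t)
    (hp0 : p 0 = 0) (hq0 : q 0 = 0)
    (hpos : ∀ t ∈ Ioo (0:ℝ) ε, 0 < p t ∧ 0 < q t)
    (hc : Tendsto (fun t => q t ^ 2 / p t) (𝓝[>] 0) (𝓝 c))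
    (y : ℝ → ℝ) (hyc : ContinuousOn y (Icc 0 T))
    (hy0 : Tendsto y (𝓝[>] 0) (𝓝 y₀)) (hy₀ : c < |y₀|) :
    Tendsto (fun t => p t * lapCondExp (p t) (q t) (y t)) (𝓝[>] 0)
      (𝓝 ((1 - c / |y₀|) * y₀)) :=
  laplace_cond_exp_limit_general T ε c y₀ hT hε p q hqc hq0 hpos hc y hy0 hy₀
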